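/- Let n, m be natural numbers with n, m ∉ {0, 1}. If s(n) ~ s(m), then n and m have the same set of prime divisors. -/

import Mathlib

noncomputable section
set_option maxHeartbeats 1000000
open scoped TensorProduct

instance (p : Nat.Primes) : Fact (p : ℕ).Prime := ⟨p.2⟩

/-- The profinite integers `Ẑ = ∏_p ℤ_p`. -/
abbrev ZHat : Type := ∀ p : Nat.Primes, ℤ_[(p : ℕ)]

/-- The finite adele ring `𝔸_f = Ẑ ⊗ ℚ` of `ℚ`. -/
abbrev AF : Type := ZHat ⊗[ℤ] ℚ

/-- The embedding `Ẑ ⊆ 𝔸_f`. -/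
def iZ : ZHat →+* AF := Algebra.TensorProduct.includeLeftRingHom

/-- The diagonal embedding `ℚ ⊆ 𝔸_f`. -/
def iQ : ℚ →+* AF :=
  (Algebra.TensorProduct.includeRight (R := ℤ) (A := ZHat) (B := ℚ)).toRingHom

/-- The relation `z ~ z'` on `𝔸_f`: there are `a, b, c, d ∈ ℚ` with `ad − bc ≠ 0`,
`a + c·z` a unit of `𝔸_f`, and `(b + d·z)·(a + c·z)⁻¹ − z'` in the diagonal image
of `ℚ` (the partially defined `PGL₂(ℚ)`-action `z ↦ (b+dz)/(a+cz)`). -/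
def adeleRel (z z' : AF) : Prop :=
  ∃ a b c d : ℚ, a * d - b * c ≠ 0 ∧
    ∃ w : AF, (iQ a + iQ c * z) * w = 1 ∧
      ∃ q : ℚ, (iQ b + iQ d * z) * w - z' = iQ q

/-- The profinite integer `s(n)` whose `p`-th component is `p^{v_p(n)}`, the largest
power of `p` dividing `n` (with component `0` when `n = 0`). -/
def sFun (n : ℕ) : ZHat :=
  fun p => if n = 0 then 0 else ((p : ℕ) : ℤ_[(p : ℕ)]) ^ (n.factorization (p : ℕ))

/-! Evaluating at a prime `p` turns `s(n) ~ s(m)` into the rational identity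
`b + d·p^{v_p(n)} = (p^{v_p(m)} + q)(a + c·p^{v_p(n)})`, with the same `a, b, c, d, q` for
every `p`. At a prime dividing neither `n` nor `m` both powers are `1`; subtracting that
instance from the one at `p` and using `ad − bc ≠ 0` shows `p^{v_p(n)} = 1 ↔ p^{v_p(m)} = 1`. -/

def evalAF (p : Nat.Primes) : AF →ₐ[ℤ] ℚ_[(p : ℕ)] :=
  Algebra.TensorProduct.productMap
    ((PadicInt.Coe.ringHom.comp
      (Pi.evalRingHom (fun q : Nat.Primes => ℤ_[(q : ℕ)]) p)).toIntAlgHom)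
    ((Rat.castHom ℚ_[(p : ℕ)]).toIntAlgHom)

@[simp]
lemma evalAF_iZ (p : Nat.Primes) (x : ZHat) : evalAF p (iZ x) = (x p : ℚ_[(p : ℕ)]) := by
  simp only [iZ, Algebra.TensorProduct.includeLeftRingHom_apply, evalAF]
  erw [Algebra.TensorProduct.productMap_apply_tmul, map_one, mul_one]
  rfl

@[simp]
lemma evalAF_iQ (p : Nat.Primes) (r : ℚ) : evalAF p (iQ r) = (r : ℚ_[(p : ℕ)]) := by
  simp only [iQ, AlgHom.toRingHom_eq_coe, RingHom.coe_coe,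
    Algebra.TensorProduct.includeRight_apply, evalAF]
  erw [Algebra.TensorProduct.productMap_apply_tmul, map_one, one_mul]
  rfl

lemma evalAF_iZ_sFun (p : Nat.Primes) {n : ℕ} (hn : n ≠ 0) :
    evalAF p (iZ (sFun n)) = (((p : ℚ) ^ n.factorization p : ℚ) : ℚ_[(p : ℕ)]) := by
  simp [sFun, hn]

lemma adeleRel.exists_mul_eq {z z' : AF} (h : adeleRel z z') :
    ∃ a b c d q : ℚ, a * d - b * c ≠ 0 ∧ IsUnit (iQ a + iQ c * z) ∧
      iQ b + iQ d * z = (z' + iQ q) * (iQ a + iQ c * z) := by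
  obtain ⟨a, b, c, d, hdet, w, hw, q, hq⟩ := h
  refine ⟨a, b, c, d, q, hdet, IsUnit.of_mul_eq_one w hw, ?_⟩
  calc iQ b + iQ d * z = (iQ b + iQ d * z) * ((iQ a + iQ c * z) * w) := by rw [hw, mul_one]
    _ = ((iQ b + iQ d * z) * w) * (iQ a + iQ c * z) := by ring
    _ = (z' + iQ q) * (iQ a + iQ c * z) := by rw [sub_eq_iff_eq_add'.mp hq]

lemma exists_rat_relation_of_adeleRel_sFun {n m : ℕ} (hn : n ≠ 0) (hm : m ≠ 0)
    (h : adeleRel (iZ (sFun n)) (iZ (sFun m))) :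
    ∃ a b c d q : ℚ, a * d - b * c ≠ 0 ∧ ∀ p : Nat.Primes,
      a + c * (p : ℚ) ^ n.factorization p ≠ 0 ∧
      b + d * (p : ℚ) ^ n.factorization p =
        ((p : ℚ) ^ m.factorization p + q) * (a + c * (p : ℚ) ^ n.factorization p) := by
  obtain ⟨a, b, c, d, q, hdet, hunit, heq⟩ := h.exists_mul_eq
  refine ⟨a, b, c, d, q, hdet, fun p => ⟨fun h0 => ?_, ?_⟩⟩
  · have hunit_p : IsUnit ((a + c * (p : ℚ) ^ n.factorization p : ℚ) : ℚ_[(p : ℕ)]) := by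
      simpa [evalAF_iZ_sFun p hn] using hunit.map (evalAF p)
    rw [h0, Rat.cast_zero] at hunit_p
    exact not_isUnit_zero hunit_p
  · have := congrArg (evalAF p) heq
    simp only [map_add, map_mul, evalAF_iQ, evalAF_iZ_sFun p hn, evalAF_iZ_sFun p hm] at this
    exact_mod_cast this

lemma eq_one_iff_of_mul_eq {K : Type*} [CommRing K] [IsDomain K] {a b c d q x y : K}
    (hdet : a * d - b * c ≠ 0) (hac : a + c ≠ 0) (h₁ : b + d = (1 + q) * (a + c))
    (hxy : b + d * x = (y + q) * (a + c * x)) : x = 1 ↔ y = 1 := by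
  constructor
  · rintro rfl
    have : (y - 1) * (a + c) = 0 := by linear_combination h₁ - hxy
    exact sub_eq_zero.mp ((mul_eq_zero.mp this).resolve_right hac)
  · rintro rfl
    have : (d - (1 + q) * c) * (x - 1) = 0 := by linear_combination hxy - h₁
    refine sub_eq_zero.mp ((mul_eq_zero.mp this).resolve_left fun hd => hdet ?_)
    linear_combination (-c) * h₁ + (a + c) * hd

lemma Nat.Prime.cast_pow_factorization_eq_one_iff {p n : ℕ} (hp : p.Prime) (hn : n ≠ 0) :
    (p : ℚ) ^ n.factorization p = 1 ↔ ¬ p ∣ n := by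
  rw [← Nat.cast_pow, Nat.cast_eq_one, Nat.pow_eq_one, Nat.factorization_eq_zero_iff]
  simp [hp, hp.ne_one, hn]

lemma exists_prime_not_dvd_of_ne_zero {n m : ℕ} (hn : n ≠ 0) (hm : m ≠ 0) :
    ∃ r : ℕ, r.Prime ∧ ¬ r ∣ n ∧ ¬ r ∣ m := by
  obtain ⟨r, hle, hr⟩ := Nat.exists_infinite_primes (n * m + 1)
  have hrnm : ¬ r ∣ n * m := Nat.not_dvd_of_pos_of_lt (by positivity) (by omega)
  exact ⟨r, hr, fun h => hrnm (h.mul_right m), fun h => hrnm (h.mul_left n)⟩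

theorem rel_sFun_same_prime_divisors_general (n m : ℕ) (hn0 : n ≠ 0)
    (hm0 : m ≠ 0) (h : adeleRel (iZ (sFun n)) (iZ (sFun m))) :
    ∀ p : ℕ, p.Prime → (p ∣ n ↔ p ∣ m) := by
  obtain ⟨a, b, c, d, q, hdet, hloc⟩ := exists_rat_relation_of_adeleRel_sFun hn0 hm0 h
  obtain ⟨r, hr, hrn, hrm⟩ := exists_prime_not_dvd_of_ne_zero hn0 hm0
  obtain ⟨hac, h₁⟩ := hloc ⟨r, hr⟩
  simp only [Nat.factorization_eq_zero_of_not_dvd hrn, Nat.factorization_eq_zero_of_not_dvd hrm,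
    pow_zero, mul_one] at hac h₁
  intro p hp
  have hp_iff := eq_one_iff_of_mul_eq hdet hac h₁ (hloc ⟨p, hp⟩).2
  rw [hp.cast_pow_factorization_eq_one_iff hn0, hp.cast_pow_factorization_eq_one_iff hm0] at hp_iff
  exact not_iff_not.mp hp_iff

/-- if `n, m ∉ {0,1}` and `s(n) ~ s(m)`, then `n` and `m` have the same
prime divisors. -/
theorem rel_sFun_same_prime_divisors (n m : ℕ) (hn0 : n ≠ 0) (hn1 : n ≠ 1)
    (hm0 : m ≠ 0) (hm1 : m ≠ 1) (h : adeleRel (iZ (sFun n)) (iZ (sFun m))) :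
    ∀ p : ℕ, p.Prime → (p ∣ n ↔ p ∣ m) :=
  rel_sFun_same_prime_divisors_general n m hn0 hm0 h
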